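/- arXiv:1502.05277 — 2 statements merged into one kernel-verified Lean document; each statement's English description precedes it below -/
import Mathlib

section
/- Let G be a finite simple graph and let S be any subset of V(G). Then td(G) ≤ td(G⟨S⟩) + td(G − S). -/
/-- A `k`-ranking of a simple graph `G`: a labeling of the vertices with values from
`{1, …, k}` such that every path joining two distinct vertices with the same label
contains a vertex with a strictly higher label. -/
def IsRanking {V : Type*} (G : SimpleGraph V) (k : ℕ) (f : V → ℕ) : Prop :=
  (∀ v, 1 ≤ f v ∧ f v ≤ k) ∧
  ∀ ⦃u v : V⦄ (p : G.Walk u v), p.IsPath → u ≠ v → f u = f v →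
    ∃ w ∈ p.support, f u < f w

/-- The tree-depth of `G`: the least `k` such that `G` admits a `k`-ranking. -/
noncomputable def treedepth {V : Type*} (G : SimpleGraph V) : ℕ :=
  sInf {k | ∃ f, IsRanking G k f}

/-- The graph `G⟨S⟩` on vertex set `S`: distinct `u, v ∈ S` are adjacent iff they are
adjacent in `G`, or some connected component of `G − S` contains a vertex adjacent in
`G` to `u` and a vertex adjacent in `G` to `v`. -/
def closureOn {V : Type*} (G : SimpleGraph V) (S : Set V) : SimpleGraph S where
  Adj u w := u ≠ w ∧ (G.Adj u.1 w.1 ∨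
    ∃ a b : ↥(Sᶜ : Set V), G.Adj a.1 u.1 ∧ G.Adj b.1 w.1 ∧
      (G.induce (Sᶜ : Set V)).Reachable a b)
  symm := by
    constructor
    rintro u w ⟨hne, h | ⟨a, b, h1, h2, h3⟩⟩
    · exact ⟨hne.symm, Or.inl h.symm⟩
    · exact ⟨hne.symm, Or.inr ⟨b, a, h2, h1, h3.symm⟩⟩
  loopless := ⟨fun u h => h.1 rfl⟩


/-!
Take optimal rankings `f` of `G⟨S⟩` and `g` of `G − S`, and label `v ∈ S` by `f v + td(G − S)`
and `v ∉ S` by `g v`. Two equally labelled vertices then lie on the same side of `S`. Outside `S`,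
a path either stays in `G − S`, where `g` supplies a higher vertex, or meets `S`, where every label
is higher. Inside `S`, the `S`-vertices of a path of `G` form, in order, a walk of `G⟨S⟩`, because
consecutive ones are adjacent in `G` or joined through a single component of `G − S`; so `f`
supplies a higher vertex on it.
-/

open SimpleGraph

section

variable {V : Type*}

section Ranking

variable {G : SimpleGraph V} {k : ℕ} {f : V → ℕ}

lemma IsRanking.exists_lt_of_walk (hf : IsRanking G k f) {u v : V} (p : G.Walk u v)
    (huv : u ≠ v) (h : f u = f v) : ∃ w ∈ p.support, f u < f w := by
  classical
  obtain ⟨w, hw, hlt⟩ := hf.2 p.bypass p.bypass_isPath huv h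
  exact ⟨w, p.support_bypass_subset_support hw, hlt⟩

lemma exists_isRanking [Finite V] (G : SimpleGraph V) : ∃ k f, IsRanking G k f := by
  obtain ⟨n, ⟨e⟩⟩ := Finite.exists_equiv_fin V
  refine ⟨n, fun v => e v + 1, fun v => ⟨Nat.le_add_left 1 _, (e v).2⟩, ?_⟩
  intro u v _ _ huv heq
  exact absurd (e.injective (Fin.ext (Nat.add_right_cancel heq))) huv

lemma exists_isRanking_treedepth [Finite V] (G : SimpleGraph V) :
    ∃ f, IsRanking G (treedepth G) f :=
  Nat.sInf_mem (exists_isRanking G)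

lemma treedepth_le_of_isRanking (hf : IsRanking G k f) : treedepth G ≤ k :=
  Nat.sInf_le ⟨f, hf⟩

end Ranking

namespace closureOn

variable {G : SimpleGraph V} {S : Set V}

variable (G S) in
/-- The state of a walk of `G` that has left `a ∈ S` and not yet returned to `S`. -/
def Linked (a : S) (x : V) : Prop :=
  x = a ∨ ∃ (hx : x ∉ S) (c : ↥(Sᶜ : Set V)),
    G.Adj c a ∧ (G.induce (Sᶜ : Set V)).Reachable c ⟨x, hx⟩

lemma Linked.adj_of_mem {a : S} {x y : V} (h : Linked G S a x) (hxy : G.Adj x y) (hy : y ∈ S)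
    (hne : a ≠ ⟨y, hy⟩) : (closureOn G S).Adj a ⟨y, hy⟩ := by
  refine ⟨hne, ?_⟩
  rcases h with rfl | ⟨hx, c, hca, hcx⟩
  · exact Or.inl hxy
  · exact Or.inr ⟨c, ⟨x, hx⟩, hca, hxy, hcx⟩

lemma Linked.of_not_mem {a : S} {x y : V} (h : Linked G S a x) (hxy : G.Adj x y)
    (hy : y ∉ S) : Linked G S a y := by
  refine Or.inr ⟨hy, ?_⟩
  rcases h with rfl | ⟨hx, c, hca, hcx⟩
  · exact ⟨⟨y, hy⟩, hxy.symm, .refl _⟩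
  · exact ⟨c, hca, hcx.trans (Adj.reachable (G := G.induce (Sᶜ : Set V)) hxy)⟩

lemma exists_walk_of_linked {x v : V} (p : G.Walk x v) (hv : v ∈ S) {a : S}
    (ha : Linked G S a x) :
    ∃ q : (closureOn G S).Walk a ⟨v, hv⟩, ∀ w ∈ q.support, w = a ∨ (w : V) ∈ p.support := by
  induction p generalizing a with
  | nil =>
    rcases ha with rfl | ⟨hx, -⟩
    · exact ⟨.nil, by simp⟩
    · exact absurd hv hx
  | @cons x y v hxy p ih =>
    by_cases hy : y ∈ S
    · obtain ⟨q, hq⟩ := ih hv (a := ⟨y, hy⟩) (Or.inl rfl)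
      have hq' : ∀ w ∈ q.support, (w : V) ∈ p.support := fun w hw =>
        (hq w hw).elim (fun h => h ▸ p.start_mem_support) id
      by_cases hay : a = ⟨y, hy⟩
      · subst hay
        exact ⟨q, fun w hw => Or.inr (p.support_subset_support_cons hxy (hq' w hw))⟩
      · refine ⟨.cons (ha.adj_of_mem hxy hy hay) q, fun w hw => ?_⟩
        rw [Walk.support_cons, List.mem_cons] at hw
        exact hw.imp id fun hw => p.support_subset_support_cons hxy (hq' w hw)
    · obtain ⟨q, hq⟩ := ih hv (ha.of_not_mem hxy hy)
      exact ⟨q, fun w hw => (hq w hw).imp_right fun h => p.support_subset_support_cons hxy h⟩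

lemma exists_walk {u v : V} (p : G.Walk u v) (hu : u ∈ S) (hv : v ∈ S) :
    ∃ q : (closureOn G S).Walk ⟨u, hu⟩ ⟨v, hv⟩, ∀ w ∈ q.support, (w : V) ∈ p.support := by
  obtain ⟨q, hq⟩ := exists_walk_of_linked p hv (a := ⟨u, hu⟩) (Or.inl rfl)
  exact ⟨q, fun w hw => (hq w hw).elim (fun h => h ▸ p.start_mem_support) id⟩

end closureOn

section StackLabels

variable {S : Set V} [DecidablePred (· ∈ S)]

variable (S) in
def stackLabels (f : S → ℕ) (g : ↥(Sᶜ : Set V) → ℕ) (k : ℕ) (v : V) : ℕ :=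
  if hv : v ∈ S then f ⟨v, hv⟩ + k else g ⟨v, hv⟩

variable {f : S → ℕ} {g : ↥(Sᶜ : Set V) → ℕ} {k : ℕ}

lemma stackLabels_of_mem {v : V} (hv : v ∈ S) : stackLabels S f g k v = f ⟨v, hv⟩ + k :=
  dif_pos hv

lemma stackLabels_of_not_mem {v : V} (hv : v ∉ S) : stackLabels S f g k v = g ⟨v, hv⟩ :=
  dif_neg hv

theorem isRanking_stackLabels {G : SimpleGraph V} {k₁ k₂ : ℕ}
    (hf : IsRanking (closureOn G S) k₁ f) (hg : IsRanking (G.induce (Sᶜ : Set V)) k₂ g) :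
    IsRanking G (k₁ + k₂) (stackLabels S f g k₂) := by
  have hlt : ∀ x ∉ S, ∀ y ∈ S, stackLabels S f g k₂ x < stackLabels S f g k₂ y :=
    fun x hx y hy => by
      have := (hg.1 ⟨x, hx⟩).2; have := (hf.1 ⟨y, hy⟩).1
      rw [stackLabels_of_not_mem hx, stackLabels_of_mem hy]; omega
  refine ⟨fun v => ?_, fun u v p _ huv heq => ?_⟩
  · by_cases hv : v ∈ S
    · have := hf.1 ⟨v, hv⟩; rw [stackLabels_of_mem hv]; omega
    · have := hg.1 ⟨v, hv⟩; rw [stackLabels_of_not_mem hv]; omega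
  by_cases hu : u ∈ S <;> by_cases hv : v ∈ S
  · rw [stackLabels_of_mem hu, stackLabels_of_mem hv, Nat.add_right_cancel_iff] at heq
    obtain ⟨q, hq⟩ := closureOn.exists_walk p hu hv
    obtain ⟨w, hw, hfw⟩ := hf.exists_lt_of_walk q (Subtype.coe_ne_coe.mp huv) heq
    refine ⟨w, hq w hw, ?_⟩
    rw [stackLabels_of_mem hu, stackLabels_of_mem w.2]
    exact Nat.add_lt_add_right hfw k₂
  · exact absurd heq (hlt v hv u hu).ne'
  · exact absurd heq (hlt u hu v hv).ne
  · by_cases hp : ∃ w ∈ p.support, w ∈ S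
    · obtain ⟨w, hw, hwS⟩ := hp
      exact ⟨w, hw, hlt u hu w hwS⟩
    rw [stackLabels_of_not_mem hu, stackLabels_of_not_mem hv] at heq
    have hpS : ∀ x ∈ p.support, x ∈ (Sᶜ : Set V) := fun x hx hxS => hp ⟨x, hx, hxS⟩
    obtain ⟨w, hw, hgw⟩ := hg.exists_lt_of_walk (p.induce _ hpS) (Subtype.coe_ne_coe.mp huv) heq
    rw [Walk.support_induce, List.mem_attachWith] at hw
    exact ⟨w, hw, by rwa [stackLabels_of_not_mem hu, stackLabels_of_not_mem w.2]⟩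

end StackLabels

end

/-- For any `S ⊆ V(G)`, `td(G) ≤ td(G⟨S⟩) + td(G − S)`. -/
theorem treedepth_le_closureOn_add {V : Type*} [Fintype V] (G : SimpleGraph V)
    (S : Set V) :
    treedepth G ≤ treedepth (closureOn G S) + treedepth (G.induce (Sᶜ : Set V)) := by
  classical
  obtain ⟨f, hf⟩ := exists_isRanking_treedepth (closureOn G S)
  obtain ⟨g, hg⟩ := exists_isRanking_treedepth (G.induce (Sᶜ : Set V))
  exact treedepth_le_of_isRanking (isRanking_stackLabels hf hg)
end

section
/- Let k ≥ 1 and 1 ≤ s ≤ k, let 1 ≤ q ≤ s, and let π_1 + … + π_q = s be a partition of s into positive integers. Let Q be the graph whose vertex set is the disjoint union of sets B_1, …, B_q with |B_i| = π_i and sets H_1, …, H_q each of size k − s, in which all vertices of B_1 ∪ … ∪ B_q are pairwise adjacent, each H_i induces a complete graph, and every vertex of B_i is adjacent to every vertex of H_i for each i (with no other adjacencies). Then td(Q) = k. -/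
/-- The block index of a vertex of the graph `Q`: vertices are either in one of the
parts `B_i` of the central clique (left summand, `Sum.inl ⟨i, _⟩`) or in the outer
clique `H_i` (right summand, `Sum.inr (i, _)`). -/
def qIdx {q h : ℕ} {π : Fin q → ℕ} : ((Σ i : Fin q, Fin (π i)) ⊕ (Fin q × Fin h)) → Fin q
  | Sum.inl x => x.1
  | Sum.inr x => x.1

/-- The graph `Q`: the central clique `B_1 ∪ ⋯ ∪ B_q` (with `|B_i| = π i`) together with
disjoint cliques `H_1, …, H_q` each of size `h`, where every vertex of `B_i` is joined to
every vertex of `H_i`. Two distinct vertices are adjacent iff they both lie in the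
central clique, or they have the same block index. -/
def Qgraph (q h : ℕ) (π : Fin q → ℕ) :
    SimpleGraph ((Σ i : Fin q, Fin (π i)) ⊕ (Fin q × Fin h)) where
  Adj x y := x ≠ y ∧ ((x.isLeft ∧ y.isLeft) ∨ qIdx x = qIdx y)
  symm := ⟨by
    rintro x y ⟨hne, h | h⟩
    · exact ⟨hne.symm, Or.inl ⟨h.2, h.1⟩⟩
    · exact ⟨hne.symm, Or.inr h.symm⟩⟩
  loopless := ⟨fun x hx => hx.1 rfl⟩

/-!
Labelling `H_i` by `1, …, k - s` and the central clique `B = B_1 ∪ ⋯ ∪ B_q` injectively by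
`k - s + 1, …, k` is a ranking: equal labels only occur in different `H_i`, and every path
between different `H_i` crosses `B`. Conversely, in any ranking let `x₀ ∈ B_i` carry the least
label on `B`. A vertex of `H_i` cannot share a label with a vertex `y` of `B`: either `y ∈ B_i`
is adjacent to it, or the path through `x₀` would force a label above that of `x₀`, hence above
that of `y`. So the `s + (k - s)` vertices of `B ∪ H_i` carry distinct labels.
-/

open SimpleGraph

section Ranking

variable {V : Type*} {G : SimpleGraph V} {n : ℕ} {f : V → ℕ}

theorem treedepth_eq_of_isRanking {k : ℕ} (hf : IsRanking G k f)
    (hlow : ∀ n g, IsRanking G n g → k ≤ n) : treedepth G = k :=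
  le_antisymm (Nat.sInf_le ⟨f, hf⟩) (le_csInf ⟨k, f, hf⟩ fun n ⟨g, hg⟩ => hlow n g hg)

theorem IsRanking.ne_of_adj (hf : IsRanking G n f) {u v : V} (h : G.Adj u v) : f u ≠ f v := by
  intro he
  have hp : (Walk.cons h Walk.nil).IsPath := by simp [h.ne]
  obtain ⟨w, hw, hlt⟩ := hf.2 _ hp h.ne he
  simp only [Walk.support_cons, Walk.support_nil, List.mem_cons,
    List.not_mem_nil, or_false] at hw
  rcases hw with rfl | rfl <;> omega

theorem IsRanking.lt_of_adj_of_adj (hf : IsRanking G n f) {u c v : V} (huc : G.Adj u c)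
    (hcv : G.Adj c v) (huv : u ≠ v) (he : f u = f v) : f u < f c := by
  have hp : (Walk.cons huc (Walk.cons hcv Walk.nil)).IsPath := by
    simp [huc.ne, hcv.ne, huv]
  obtain ⟨w, hw, hlt⟩ := hf.2 _ hp huv he
  simp only [Walk.support_cons, Walk.support_nil, List.mem_cons,
    List.not_mem_nil, or_false] at hw
  rcases hw with rfl | rfl | rfl <;> omega

theorem IsRanking.card_le_of_injective {ι : Type*} [Fintype ι] (hf : IsRanking G n f)
    (g : ι → V) (hg : Function.Injective (f ∘ g)) : Fintype.card ι ≤ n := by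
  simpa using Finset.card_le_card_of_injOn (f ∘ g) (s := Finset.univ) (t := Finset.Icc 1 n)
    (fun x _ => by simpa using hf.1 (g x)) hg.injOn

end Ranking

namespace Qgraph

variable {q h : ℕ} {π : Fin q → ℕ}

theorem adj_inl_inl {x y : Σ i : Fin q, Fin (π i)} (hxy : x ≠ y) :
    (Qgraph q h π).Adj (.inl x) (.inl y) :=
  ⟨by simpa using hxy, .inl ⟨rfl, rfl⟩⟩

theorem adj_inr_inl {i : Fin q} {b : Fin h} {y : Σ i : Fin q, Fin (π i)} (hy : y.1 = i) :
    (Qgraph q h π).Adj (.inr (i, b)) (.inl y) :=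
  ⟨by simp, .inr hy.symm⟩

theorem adj_inr_inr {i : Fin q} {b c : Fin h} (hbc : b ≠ c) :
    (Qgraph q h π).Adj (.inr (i, b)) (.inr (i, c)) :=
  ⟨by simpa using hbc, .inr rfl⟩

theorem exists_isLeft_mem_support {x y : (Σ i : Fin q, Fin (π i)) ⊕ (Fin q × Fin h)}
    (p : (Qgraph q h π).Walk x y) (hxy : qIdx x ≠ qIdx y) : ∃ w ∈ p.support, w.isLeft := by
  induction p with
  | nil => exact absurd rfl hxy
  | @cons u v w hadj p ih =>
    cases u with
    | inl a => exact ⟨.inl a, p.cons hadj |>.start_mem_support, rfl⟩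
    | inr a =>
      have huv : qIdx (.inr a) = qIdx v := hadj.2.resolve_left (by simp)
      obtain ⟨z, hz, hzl⟩ := ih (huv ▸ hxy)
      exact ⟨z, by simp [hz], hzl⟩

theorem isRanking {s : ℕ} (e : (Σ i : Fin q, Fin (π i)) ↪ Fin s) :
    IsRanking (Qgraph q h π) (h + s) (Sum.elim (fun x => h + 1 + e x) (fun y => y.2 + 1)) := by
  refine ⟨fun v => ?_, ?_⟩
  · rcases v with x | y
    · have := (e x).isLt; simp only [Sum.elim_inl]; omega
    · have := y.2.isLt; simp only [Sum.elim_inr]; omega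
  rintro (x | ⟨i, b⟩) (y | ⟨j, c⟩) p - hne he <;> simp only [Sum.elim_inl, Sum.elim_inr] at he
  · have hexy : e x = e y := Fin.ext (by omega)
    exact absurd (e.injective hexy) (by simpa using hne)
  · omega
  · omega
  · have hbc : b = c := Fin.ext (by omega)
    subst hbc
    have hij : i ≠ j := by rintro rfl; exact hne rfl
    obtain ⟨w | w, hw, hwl⟩ := exists_isLeft_mem_support p hij
    · exact ⟨.inl w, hw, by simp only [Sum.elim_inl, Sum.elim_inr]; omega⟩
    · simp at hwl

theorem card_add_le_of_isRanking {n : ℕ} {f : (Σ i : Fin q, Fin (π i)) ⊕ (Fin q × Fin h) → ℕ}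
    [Nonempty (Σ i : Fin q, Fin (π i))] (hf : IsRanking (Qgraph q h π) n f) :
    Fintype.card (Σ i : Fin q, Fin (π i)) + h ≤ n := by
  obtain ⟨x₀, hx₀⟩ := Finite.exists_min (f ∘ .inl)
  have hH_ne_B : ∀ (b : Fin h) y, f (.inr (x₀.1, b)) ≠ f (.inl y) := by
    intro b y he
    by_cases hy : y.1 = x₀.1
    · exact hf.ne_of_adj (adj_inr_inl hy) he
    · have hx₀y : x₀ ≠ y := by rintro rfl; exact hy rfl
      have := hf.lt_of_adj_of_adj (adj_inr_inl rfl) (adj_inl_inl hx₀y) (by simp) he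
      have := hx₀ y
      simp only [Function.comp_apply] at this
      omega
  have hinj : Function.Injective (f ∘ Sum.elim .inl (fun b => .inr (x₀.1, b))) := by
    rintro (x | b) (y | c) he <;> simp only [Function.comp_apply, Sum.elim_inl, Sum.elim_inr] at he
    · by_contra hxy
      exact hf.ne_of_adj (adj_inl_inl fun h => hxy (congrArg _ h)) he
    · exact absurd he.symm (hH_ne_B c x)
    · exact absurd he (hH_ne_B b y)
    · by_contra hbc
      exact hf.ne_of_adj (adj_inr_inr fun h => hbc (congrArg _ h)) he
  simpa using hf.card_le_of_injective _ hinj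

end Qgraph

theorem treedepth_Qgraph_general (k s q : ℕ) (hs1 : 1 ≤ s) (hsk : s ≤ k) (π : Fin q → ℕ)
    (hsum : ∑ i, π i = s) :
    treedepth (Qgraph q (k - s) π) = k := by
  have hcard : Fintype.card (Σ i : Fin q, Fin (π i)) = s := by simp [hsum]
  have : Nonempty (Σ i : Fin q, Fin (π i)) := Fintype.card_pos_iff.mp (by omega)
  have hk : k - s + s = k := by omega
  refine treedepth_eq_of_isRanking
    (hk ▸ Qgraph.isRanking (Fintype.equivFinOfCardEq hcard).toEmbedding) fun n g hg => ?_
  have := Qgraph.card_add_le_of_isRanking hg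
  omega

/-- For `1 ≤ s ≤ k`, `1 ≤ q ≤ s`, and a partition `π_1 + ⋯ + π_q = s` of `s` into
positive integers, the graph `Q` built from cliques `B_i` (`|B_i| = π i`) and `H_i`
(`|H_i| = k − s`) has tree-depth `k`. -/
theorem treedepth_Qgraph (k s q : ℕ) (hk : 1 ≤ k) (hs1 : 1 ≤ s) (hsk : s ≤ k)
    (hq1 : 1 ≤ q) (hqs : q ≤ s) (π : Fin q → ℕ) (hπ : ∀ i, 1 ≤ π i)
    (hsum : ∑ i, π i = s) :
    treedepth (Qgraph q (k - s) π) = k :=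
  treedepth_Qgraph_general k s q hs1 hsk π hsum
end
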